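/- If there exists w̄ ∈ C⁺\{0} such that the cdf of w̄ᵀX is not strictly increasing, then there exists D ∈ 𝒢(ℝ^d, C) with D ≠ cl_Φ(D); in fact one can take D = z^b + H⁺(w̄) where w̄ᵀz^a = a < b = w̄ᵀz^b and F_{w̄ᵀX}(a) = F_{w̄ᵀX}(b), and then z^a ∈ cl_Φ(D)\D. -/

import Mathlib

open MeasureTheory Set Filter
open scoped ENNReal Pointwise

noncomputable section

def dotp {d : ℕ} (w z : Fin d → ℝ) : ℝ := ∑ i, w i * z i

def dualCone {d : ℕ} (C : Set (Fin d → ℝ)) : Set (Fin d → ℝ) :=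
  {w | ∀ z ∈ C, 0 ≤ dotp w z}

def Fw {d : ℕ} {Ω : Type*} [MeasurableSpace Ω] (μ : Measure Ω)
    (X : Ω → Fin d → ℝ) (w z : Fin d → ℝ) : ℝ≥0∞ :=
  μ {ω | dotp w (X ω) ≤ dotp w z}

def FC {d : ℕ} {Ω : Type*} [MeasurableSpace Ω] (μ : Measure Ω)
    (X : Ω → Fin d → ℝ) (C : Set (Fin d → ℝ)) (z : Fin d → ℝ) : ℝ≥0∞ :=
  ⨅ w ∈ dualCone C \ {0}, Fw μ X w z

def Qlo {d : ℕ} {Ω : Type*} [MeasurableSpace Ω] (μ : Measure Ω)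
    (X : Ω → Fin d → ℝ) (C : Set (Fin d → ℝ)) (p : ℝ≥0∞) : Set (Fin d → ℝ) :=
  {z | p ≤ FC μ X C z}

lemma dotp_add_right {d : ℕ} (w x y : Fin d → ℝ) :
    dotp w (x + y) = dotp w x + dotp w y := by
  simp [dotp, mul_add, Finset.sum_add_distrib]

lemma dotp_smul_right {d : ℕ} (w : Fin d → ℝ) (r : ℝ) (x : Fin d → ℝ) :
    dotp w (r • x) = r * dotp w x := by
  simp only [dotp, Finset.mul_sum, Pi.smul_apply, smul_eq_mul]
  exact Finset.sum_congr rfl fun i _ => by ring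

lemma dotp_comm {d : ℕ} (w z : Fin d → ℝ) : dotp w z = dotp z w := by
  simp [dotp, mul_comm]

lemma dotp_smul_left {d : ℕ} (c : ℝ) (w z : Fin d → ℝ) :
    dotp (c • w) z = c * dotp w z := by
  rw [dotp_comm, dotp_smul_right, dotp_comm]

lemma dotp_add_left {d : ℕ} (w x z : Fin d → ℝ) :
    dotp (w + x) z = dotp w z + dotp x z := by
  rw [dotp_comm, dotp_add_right, dotp_comm w, dotp_comm x]

lemma dotp_self_pos {d : ℕ} {w : Fin d → ℝ} (hw : w ≠ 0) : 0 < dotp w w := by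
  obtain ⟨i, hi⟩ := Function.ne_iff.mp hw
  have hi' : w i ≠ 0 := by simpa using hi
  exact Finset.sum_pos' (fun j _ => mul_self_nonneg _)
    ⟨i, Finset.mem_univ i, mul_self_pos.mpr hi'⟩

lemma Fw_mono {d : ℕ} {Ω : Type*} [MeasurableSpace Ω] (μ : Measure Ω)
    (X : Ω → Fin d → ℝ) (w : Fin d → ℝ) {y z : Fin d → ℝ}
    (h : dotp w y ≤ dotp w z) : Fw μ X w y ≤ Fw μ X w z :=
  measure_mono fun ω hω => le_trans hω h

theorem stmt_18 {d : ℕ} {Ω : Type*} [MeasurableSpace Ω] (μ : Measure Ω)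
    [IsProbabilityMeasure μ] (X : Ω → Fin d → ℝ) (hX : Measurable X)
    (C : Set (Fin d → ℝ)) (hCne : C.Nonempty) (hCcl : IsClosed C)
    (hCco : Convex ℝ C) (hCcone : ∀ r : ℝ, 0 ≤ r → ∀ x ∈ C, r • x ∈ C)
    (hCproper : C ≠ univ)
    (wbar : Fin d → ℝ) (hwbar : wbar ∈ dualCone C \ {0})
    (a b : ℝ) (hab : a < b)
    (hFab : μ {ω | dotp wbar (X ω) ≤ a} = μ {ω | dotp wbar (X ω) ≤ b})
    (za zb : Fin d → ℝ) (hza : dotp wbar za = a) (hzb : dotp wbar zb = b) :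
    ({z : Fin d → ℝ | b ≤ dotp wbar z} =
        closure (convexHull ℝ ({z : Fin d → ℝ | b ≤ dotp wbar z} + C))) ∧
    za ∈ ⋂ w ∈ dualCone C \ {0},
        {z : Fin d → ℝ |
          (⨅ y ∈ {z : Fin d → ℝ | b ≤ dotp wbar z}, Fw μ X w y) ≤ Fw μ X w z} ∧
    za ∉ {z : Fin d → ℝ | b ≤ dotp wbar z} ∧
    {z : Fin d → ℝ | b ≤ dotp wbar z} ≠
      ⋂ w ∈ dualCone C \ {0},
        {z : Fin d → ℝ |
          (⨅ y ∈ {z : Fin d → ℝ | b ≤ dotp wbar z}, Fw μ X w y) ≤ Fw μ X w z} := by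
  have hwne : wbar ≠ 0 := fun h => hwbar.2 h
  have hlin : IsLinearMap ℝ (fun z : Fin d → ℝ => dotp wbar z) :=
    ⟨fun x y => dotp_add_right wbar x y, fun r x => dotp_smul_right wbar r x⟩
  have hcont : Continuous fun z : Fin d → ℝ => dotp wbar z :=
    continuous_finset_sum _ fun i _ => continuous_const.mul (continuous_apply i)
  have hconv : Convex ℝ {z : Fin d → ℝ | b ≤ dotp wbar z} := convex_halfSpace_ge hlin b
  have hcl : IsClosed {z : Fin d → ℝ | b ≤ dotp wbar z} :=
    isClosed_le continuous_const hcont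
  have hnaD : za ∉ {z : Fin d → ℝ | b ≤ dotp wbar z} := by
    simp only [mem_setOf_eq, hza, not_le]; exact hab
  have hmem : za ∈ ⋂ w ∈ dualCone C \ {0},
      {z : Fin d → ℝ |
        (⨅ y ∈ {z : Fin d → ℝ | b ≤ dotp wbar z}, Fw μ X w y) ≤ Fw μ X w z} := by
    simp only [mem_iInter, mem_setOf_eq]
    intro w hw
    -- find y in the halfspace with Fw w y ≤ Fw w za
    obtain ⟨y, hyD, hle⟩ : ∃ y, b ≤ dotp wbar y ∧ Fw μ X w y ≤ Fw μ X w za := by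
      set c : ℝ := dotp w wbar / dotp wbar wbar with hc
      have hww : dotp wbar wbar ≠ 0 := ne_of_gt (dotp_self_pos hwne)
      set v : Fin d → ℝ := w - c • wbar with hv
      have hwv' : w = v + c • wbar := by rw [hv]; abel
      have hbv : dotp wbar v = 0 := by
        have : dotp wbar (w - c • wbar) = dotp wbar w - c * dotp wbar wbar := by
          have := dotp_add_right wbar (w - c • wbar) (c • wbar)
          rw [sub_add_cancel, dotp_smul_right] at this
          linarith
        rw [← hv] at this
        rw [this, dotp_comm wbar w, hc, div_mul_cancel₀ _ hww, sub_self]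
      have hwvv : dotp w v = dotp v v := by
        rw [hwv', dotp_add_left, dotp_smul_left, dotp_comm wbar v] at *
        rw [hbv]; ring
      by_cases hv0 : v = 0
      · -- w = c • wbar
        have hwc : w = c • wbar := by rw [hwv', hv0, zero_add]
        have hc0 : c ≠ 0 := by
          intro h; exact hw.2 (by simp [hwc, h])
        rcases lt_or_gt_of_ne hc0 with hcneg | hcpos
        · -- c < 0 : take y = zb
          refine ⟨zb, le_of_eq hzb.symm, measure_mono fun ω hω => ?_⟩
          simp only [mem_setOf_eq, hwc, dotp_smul_left, hzb, hza] at *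
          nlinarith
        · -- c > 0 : Fw w zb = Fw w za via hFab
          refine ⟨zb, le_of_eq hzb.symm, le_of_eq ?_⟩
          have hset : ∀ r (z : Fin d → ℝ), dotp wbar z = r →
              {ω | dotp w (X ω) ≤ dotp w z} = {ω | dotp wbar (X ω) ≤ r} := by
            intro r z hr
            ext ω
            simp only [mem_setOf_eq, hwc, dotp_smul_left, hr]
            exact mul_le_mul_iff_right₀ hcpos
          show μ _ = μ _
          rw [hset b zb hzb, hset a za hza, hFab]
      · -- v ≠ 0 : move inside hyperplane
        have hvv : 0 < dotp v v := dotp_self_pos hv0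
        have hwvne : dotp w v ≠ 0 := by rw [hwvv]; exact ne_of_gt hvv
        set t : ℝ := (dotp w za - dotp w zb) / dotp w v with ht
        refine ⟨zb + t • v, ?_, Fw_mono μ X w ?_⟩
        · rw [dotp_add_right, dotp_smul_right, hbv, hzb]; simp
        · rw [dotp_add_right, dotp_smul_right, ht, div_mul_cancel₀ _ hwvne]
          linarith
    exact le_trans (iInf₂_le y hyD) hle
  refine ⟨?_, hmem, hnaD, ?_⟩
  · have hSC : {z : Fin d → ℝ | b ≤ dotp wbar z} + C = {z : Fin d → ℝ | b ≤ dotp wbar z} := by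
      apply Subset.antisymm
      · rintro x ⟨y, hy, c, hc, rfl⟩
        have h1 : 0 ≤ dotp wbar c := hwbar.1 c hc
        have h2 : dotp wbar (y + c) = dotp wbar y + dotp wbar c := dotp_add_right _ _ _
        simp only [mem_setOf_eq] at hy ⊢
        linarith
      · intro x hx
        have h0 : (0 : Fin d → ℝ) ∈ C := by
          obtain ⟨x0, hx0⟩ := hCne
          simpa using hCcone 0 le_rfl x0 hx0
        exact ⟨x, hx, 0, h0, by simp⟩
    rw [hSC, hconv.convexHull_eq, hcl.closure_eq]
  · intro h
    rw [h] at hnaD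
    exact hnaD hmem
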